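/- If f(z) = z + a_{n+1}z^{n+1} + ... is analytic in the open unit disk U, ρ > 0 is real, β is a complex number with Re(β) < n+1, and |z·f''(z) − β·(f'(z) − f(z)/z)| < ρ·n·|n+1−β| for all z in U, then |f(z)/z − 1| < ρ for all z in U. -/

import Mathlib

open Metric Set Function Filter Topology

lemma iteratedDeriv_eq_coeff {u : ℂ → ℂ} {p : FormalMultilinearSeries ℂ ℂ ℂ}
    (hp : HasFPowerSeriesAt u p 0) (j : ℕ) :
    iteratedDeriv j u 0 = (j.factorial : ℂ) * p.coeff j := by
  obtain ⟨r, hr⟩ := hp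
  have h := hr.factorial_smul (1 : ℂ) j
  rw [iteratedDeriv_eq_iteratedFDeriv, ← h, FormalMultilinearSeries.coeff]
  simp [nsmul_eq_mul]

lemma analyticOnNhd_dslope0 {u : ℂ → ℂ} (hu : AnalyticOnNhd ℂ u (ball 0 1)) :
    AnalyticOnNhd ℂ (dslope u 0) (ball 0 1) := by
  intro z hz
  rcases eq_or_ne z 0 with rfl | hz0
  · obtain ⟨p, hp⟩ := hu 0 (by simp)
    exact hp.has_fpower_series_dslope_fslope.analyticAt
  · have h1 : AnalyticAt ℂ (fun y : ℂ => (u y - u 0) / (y - 0)) z :=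
      ((hu z hz).sub analyticAt_const).div (analyticAt_id.sub analyticAt_const) (by simpa)
    apply h1.congr
    filter_upwards [isOpen_ne.mem_nhds hz0] with y hy
    rw [dslope_of_ne _ hy, slope_def_field]

lemma factor_pow {u : ℂ → ℂ} {n : ℕ} (hu : AnalyticOnNhd ℂ u (ball 0 1))
    (h0 : ∀ j, j < n → iteratedDeriv j u 0 = 0) :
    ∃ ψ : ℂ → ℂ, AnalyticOnNhd ℂ ψ (ball 0 1) ∧ ∀ z, u z = z ^ n * ψ z := by
  induction n generalizing u with
  | zero => exact ⟨u, hu, fun z => by simp⟩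
  | succ n ih =>
    have hu0 : u 0 = 0 := by simpa using h0 0 (Nat.succ_pos n)
    have hva : AnalyticOnNhd ℂ (dslope u 0) (ball 0 1) := analyticOnNhd_dslope0 hu
    have hzv : ∀ z : ℂ, z * dslope u 0 z = u z := by
      intro z
      have := sub_smul_dslope u 0 z
      simpa [hu0, smul_eq_mul] using this
    have h0v : ∀ j, j < n → iteratedDeriv j (dslope u 0) 0 = 0 := by
      intro j hj
      obtain ⟨p, hp⟩ := hu 0 (by simp)
      have hpv : HasFPowerSeriesAt (dslope u 0) p.fslope 0 :=
        hp.has_fpower_series_dslope_fslope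
      rw [iteratedDeriv_eq_coeff hpv, FormalMultilinearSeries.coeff_fslope]
      have h1 : iteratedDeriv (j+1) u 0 = 0 := h0 _ (by omega)
      rw [iteratedDeriv_eq_coeff hp] at h1
      rcases mul_eq_zero.mp h1 with h2 | h2
      · exact absurd h2 (by exact_mod_cast Nat.factorial_ne_zero (j+1))
      · simp [h2]
    obtain ⟨ψ, hψ, hfac⟩ := ih hva h0v
    exact ⟨ψ, hψ, fun z => by rw [← hzv z, hfac z]; ring⟩

lemma AnalyticAt.deriv' {a : ℂ → ℂ} {x : ℂ} (ha : AnalyticAt ℂ a x) :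
    AnalyticAt ℂ (deriv a) x :=
  (AnalyticOnNhd.deriv (fun y hy => hy : AnalyticOnNhd ℂ a {y | AnalyticAt ℂ a y})) x ha

lemma iteratedDeriv_sub_at {a b : ℂ → ℂ} {x : ℂ} (ha : AnalyticAt ℂ a x)
    (hb : AnalyticAt ℂ b x) (j : ℕ) :
    iteratedDeriv j (fun z => a z - b z) x = iteratedDeriv j a x - iteratedDeriv j b x := by
  induction j generalizing a b with
  | zero => simp
  | succ m ih =>
    rw [iteratedDeriv_succ', iteratedDeriv_succ', iteratedDeriv_succ']
    have hev : deriv (fun z => a z - b z) =ᶠ[𝓝 x] fun z => deriv a z - deriv b z := by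
      filter_upwards [ha.eventually_analyticAt, hb.eventually_analyticAt] with y hya hyb
      exact deriv_sub hya.differentiableAt hyb.differentiableAt
    rw [Filter.EventuallyEq.iteratedDeriv_eq m hev]
    exact ih ha.deriv' hb.deriv'

lemma exists_max_point {v : ℂ → ℂ} (hv : AnalyticOnNhd ℂ v (ball 0 1))
    {z₁ : ℂ} (hz₁ : z₁ ∈ ball (0:ℂ) 1) :
    ∃ z₀ ∈ ball (0:ℂ) 1, ‖v z₁‖ ≤ ‖v z₀‖ ∧
      ∀ z ∈ closedBall (0:ℂ) ‖z₀‖, ‖v z‖ ≤ ‖v z₀‖ := by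
  have hsub : closedBall (0:ℂ) ‖z₁‖ ⊆ ball 0 1 :=
    closedBall_subset_ball (by simpa [mem_ball, dist_eq_norm] using hz₁)
  have hcont : ContinuousOn (fun z => ‖v z‖) (closedBall (0:ℂ) ‖z₁‖) :=
    ((hv.continuousOn).mono hsub).norm
  obtain ⟨z₀, hz₀mem, hz₀max⟩ := (isCompact_closedBall (0:ℂ) ‖z₁‖).exists_isMaxOn
    ⟨z₁, by simp [mem_closedBall, dist_eq_norm]⟩ hcont
  refine ⟨z₀, hsub hz₀mem, hz₀max (by simp [mem_closedBall, dist_eq_norm]), fun z hz => ?_⟩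
  exact hz₀max (closedBall_subset_closedBall
    (by simpa [mem_closedBall, dist_eq_norm] using hz₀mem) hz)

lemma abs_plus_ge {n : ℕ} {β : ℂ} (hβ : β.re < n + 1) {k : ℝ} (hk : (n:ℝ) ≤ k) :
    ‖((n:ℂ) + 1 - β)‖ ≤ ‖((k:ℂ) + 1 - β)‖ := by
  have h1 : Complex.normSq ((n:ℂ)+1-β) ≤ Complex.normSq ((k:ℂ)+1-β) := by
    simp only [Complex.normSq_apply, Complex.sub_re, Complex.add_re, Complex.one_re,
      Complex.natCast_re, Complex.ofReal_re, Complex.sub_im, Complex.add_im,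
      Complex.one_im, Complex.natCast_im, Complex.ofReal_im]
    nlinarith [hβ, hk]
  calc ‖((n:ℂ) + 1 - β)‖ = Real.sqrt (Complex.normSq ((n:ℂ)+1-β)) := by
        rw [Complex.norm_def]
    _ ≤ Real.sqrt (Complex.normSq ((k:ℂ)+1-β)) := Real.sqrt_le_sqrt h1
    _ = ‖((k:ℂ) + 1 - β)‖ := by rw [Complex.norm_def]


lemma jack_lemma {u : ℂ → ℂ} {n : ℕ} {ψ : ℂ → ℂ}
    (hu : AnalyticOnNhd ℂ u (ball 0 1))
    (hψ : AnalyticOnNhd ℂ ψ (ball 0 1)) (hfac : ∀ z, u z = z ^ n * ψ z)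
    {z₀ : ℂ} (hz₀ : z₀ ∈ ball (0:ℂ) 1) (hz₀0 : z₀ ≠ 0) (hu0 : u z₀ ≠ 0)
    (hmax : ∀ z ∈ closedBall (0:ℂ) ‖z₀‖, ‖u z‖ ≤ ‖u z₀‖) :
    ∃ k : ℝ, (n : ℝ) ≤ k ∧ z₀ * deriv u z₀ = (k : ℂ) * u z₀ := by
  have hr0 : 0 < ‖z₀‖ := norm_pos_iff.mpr hz₀0
  have hr1 : ‖z₀‖ < 1 := by simpa [mem_ball, dist_eq_norm] using hz₀
  set B : ℂ → ℂ := fun z => z₀ ^ n * ψ (z₀ * z) / u z₀ with hBdef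
  have key : ∀ z : ℂ, u (z₀ * z) = u z₀ * (z ^ n * B z) := by
    intro z
    rw [hfac (z₀ * z), hBdef]
    field_simp
    ring
  have hB1 : B 1 = 1 := by
    have h1 := hfac z₀
    rw [hBdef]
    simp only [mul_one]
    rw [← h1]
    field_simp
  have hBanal : ∀ z : ℂ, ‖z‖ * ‖z₀‖ < 1 → AnalyticAt ℂ B z := by
    intro z hz
    have hmem : z₀ * z ∈ ball (0:ℂ) 1 := by
      simp only [mem_ball, dist_eq_norm, sub_zero, norm_mul]
      calc ‖z₀‖ * ‖z‖ = ‖z‖ * ‖z₀‖ := by ring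
        _ < 1 := hz
    have h1 : AnalyticAt ℂ (fun w => ψ (z₀ * w)) z :=
      (hψ _ hmem).comp (analyticAt_const.mul analyticAt_id)
    exact (analyticAt_const.mul h1).div analyticAt_const hu0
  have hBle : ∀ z ∈ closedBall (0:ℂ) 1, ‖B z‖ ≤ 1 := by
    intro z hz
    have hcl : closure (ball (0:ℂ) 1) = closedBall 0 1 := closure_ball 0 one_ne_zero
    refine Complex.norm_le_of_forall_mem_frontier_norm_le isBounded_ball ?_ ?_ (by rwa [hcl])
    · constructor
      · intro w hw
        have hw1 : ‖w‖ < 1 := by simpa [mem_ball, dist_eq_norm] using hw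
        exact ((hBanal w (by nlinarith)).differentiableAt).differentiableWithinAt
      · rw [hcl]
        intro w hw
        have hw1 : ‖w‖ ≤ 1 := by simpa [mem_closedBall, dist_eq_norm] using hw
        exact ((hBanal w (by nlinarith)).continuousAt).continuousWithinAt
    · intro w hw
      rw [frontier_ball _ one_ne_zero] at hw
      have hw1 : ‖w‖ = 1 := by simpa [mem_sphere, dist_eq_norm] using hw
      have h2 : ‖u (z₀ * w)‖ ≤ ‖u z₀‖ := by
        apply hmax
        simp [mem_closedBall, dist_eq_norm, norm_mul, hw1]
      have h3 := key w
      have h4 : ‖u z₀‖ * (‖w‖ ^ n * ‖B w‖) ≤ ‖u z₀‖ := by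
        calc ‖u z₀‖ * (‖w‖ ^ n * ‖B w‖) = ‖u (z₀ * w)‖ := by
              rw [h3]; simp [norm_mul, norm_pow]
          _ ≤ ‖u z₀‖ := h2
      rw [hw1] at h4
      simp only [one_pow, one_mul] at h4
      have h5 : 0 < ‖u z₀‖ := norm_pos_iff.mpr hu0
      nlinarith
  have hB1anal : AnalyticAt ℂ B 1 := hBanal 1 (by simpa)
  set d := deriv B 1 with hd
  have hBd : HasDerivAt B d 1 := hB1anal.differentiableAt.hasDerivAt
  -- imaginary part of d vanishes
  have hdim : d.im = 0 := by
    set γ : ℝ → ℂ := fun t => Complex.exp (t * Complex.I) with hγ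
    have hγ0 : γ 0 = 1 := by simp [hγ]
    have hγmem : ∀ t : ℝ, γ t ∈ closedBall (0:ℂ) 1 := by
      intro t
      simp [hγ, mem_closedBall, dist_eq_norm, Complex.norm_exp]
    have hγd : HasDerivAt γ Complex.I 0 := by
      have h1 : HasDerivAt (fun t : ℝ => (t : ℂ) * Complex.I) Complex.I 0 := by
        simpa using (Complex.ofRealCLM.hasDerivAt (x := (0:ℝ))).mul_const Complex.I
      have h2 := h1.cexp
      simpa [hγ] using h2
    have hBd0 : HasDerivAt B d (γ 0) := by rwa [hγ0]
    have hG : HasDerivAt (B ∘ γ) (Complex.I • d) 0 := hBd0.scomp (0:ℝ) hγd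
    have hG' : HasDerivAt (fun t : ℝ => B (γ t)) (Complex.I • d) 0 := hG
    have hRe : HasDerivAt (fun t : ℝ => (B (γ t)).re) (Complex.I * d).re 0 := by
      have := Complex.reCLM.hasFDerivAt.comp_hasDerivAt (0:ℝ) hG
      simpa [smul_eq_mul, Function.comp_def] using this
    have hIm : HasDerivAt (fun t : ℝ => (B (γ t)).im) (Complex.I * d).im 0 := by
      have := Complex.imCLM.hasFDerivAt.comp_hasDerivAt (0:ℝ) hG
      simpa [smul_eq_mul, Function.comp_def] using this
    set F : ℝ → ℝ := fun t => (B (γ t)).re ^ 2 + (B (γ t)).im ^ 2 with hF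
    have hFd : HasDerivAt F (2 * (B (γ 0)).re ^ 1 * (Complex.I * d).re
        + 2 * (B (γ 0)).im ^ 1 * (Complex.I * d).im) 0 := by
      exact (hRe.pow 2).add (hIm.pow 2)
    have hB10 : B (γ 0) = 1 := by rw [hγ0, hB1]
    have hFd' : HasDerivAt F (-(2 * d.im)) 0 := by
      convert hFd using 1
      rw [hB10]
      simp [Complex.mul_re]
    have hFmax : IsLocalMax F 0 := by
      apply Filter.Eventually.of_forall
      intro t
      have h1 : ‖B (γ t)‖ ≤ 1 := hBle _ (hγmem t)
      have h2 : F t = ‖B (γ t)‖ ^ 2 := by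
        rw [hF]
        simp only [Complex.sq_norm, Complex.normSq_apply]
        ring
      have h3 : F 0 = 1 := by simp [hF, hB10]
      rw [h2, h3]
      nlinarith [norm_nonneg (B (γ t))]
    have := hFmax.hasDerivAt_eq_zero hFd'
    linarith
  -- real part of d is nonnegative
  have hdre : 0 ≤ d.re := by
    set η : ℝ → ℂ := fun t => 1 - (t : ℂ) with hη
    have hηd : HasDerivAt η (-1 : ℂ) 0 := by
      have h1 : HasDerivAt (fun t : ℝ => (t : ℂ)) (1 : ℂ) 0 := by
        simpa using (hasDerivAt_id (0:ℝ)).ofReal_comp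
      simpa [hη] using h1.const_sub (1:ℂ)
    have hη0 : η 0 = 1 := by simp [hη]
    have hBd0 : HasDerivAt B d (η 0) := by rwa [hη0]
    have hG : HasDerivAt (B ∘ η) ((-1 : ℂ) • d) 0 := hBd0.scomp (0:ℝ) hηd
    have hH : HasDerivAt (fun t : ℝ => (B (η t)).re) (-(d.re)) 0 := by
      have := Complex.reCLM.hasFDerivAt.comp_hasDerivAt (0:ℝ) hG
      simpa [smul_eq_mul, Function.comp_def] using this
    set H : ℝ → ℝ := fun t => (B (η t)).re with hHdef
    have hslope : Tendsto (slope H 0) (𝓝[>] (0:ℝ)) (𝓝 (-(d.re))) := by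
      have h1 := hasDerivAt_iff_tendsto_slope.mp hH
      exact h1.mono_left (nhdsWithin_mono 0 (fun t ht => ne_of_gt ht))
    have hev : ∀ᶠ t in 𝓝[>] (0:ℝ), slope H 0 t ≤ 0 := by
      filter_upwards [Ioo_mem_nhdsGT_of_mem (by norm_num : (0:ℝ) ∈ Ico (0:ℝ) 1)] with t ht
      have ht0 : 0 < t := ht.1
      have ht1 : t < 1 := ht.2
      have hmem : η t ∈ closedBall (0:ℂ) 1 := by
        simp only [hη, mem_closedBall, dist_eq_norm, sub_zero]
        have : (1 : ℂ) - (t:ℂ) = ((1 - t : ℝ) : ℂ) := by push_cast; ring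
        rw [this, Complex.norm_real]
        rw [Real.norm_eq_abs, abs_of_nonneg (by linarith)]
        linarith
      have h1 : H t ≤ 1 := by
        calc H t ≤ ‖B (η t)‖ := by
              rw [hHdef]
              simpa using Complex.re_le_norm (B (η t))
          _ ≤ 1 := hBle _ hmem
      have hH0 : H 0 = 1 := by simp [hHdef, hη0, hB1]
      rw [slope_def_field]
      apply div_nonpos_of_nonpos_of_nonneg
      · rw [hH0]; linarith
      · simp [le_of_lt ht0]
    have hle : -(d.re) ≤ 0 := le_of_tendsto hslope hev
    linarith
  -- differentiate the identity
  have hud : HasDerivAt u (deriv u z₀) z₀ := (hu z₀ hz₀).differentiableAt.hasDerivAt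
  have hL : HasDerivAt (fun z => u (z₀ * z)) (z₀ * deriv u z₀) 1 := by
    have hmul : HasDerivAt (fun z : ℂ => z₀ * z) z₀ 1 := by
      simpa using (hasDerivAt_id (1:ℂ)).const_mul z₀
    have := HasDerivAt.comp (1:ℂ) (by rwa [mul_one] : HasDerivAt u (deriv u z₀) (z₀ * 1)) hmul
    simpa [mul_comm, Function.comp_def] using this
  have hR : HasDerivAt (fun z : ℂ => u z₀ * (z ^ n * B z)) (u z₀ * ((n : ℂ) + d)) 1 := by
    have h1 : HasDerivAt (fun z : ℂ => z ^ n * B z)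
        ((n : ℂ) * 1 ^ (n - 1) * B 1 + 1 ^ n * d) 1 := (hasDerivAt_pow n 1).mul hBd
    have h2 := h1.const_mul (u z₀)
    refine h2.congr_deriv ?_
    rw [hB1]
    simp
  have hEq : z₀ * deriv u z₀ = u z₀ * ((n : ℂ) + d) := by
    have hfun : (fun z => u (z₀ * z)) = fun z : ℂ => u z₀ * (z ^ n * B z) := funext key
    refine HasDerivAt.unique hL ?_
    rw [hfun]
    exact hR
  refine ⟨(n : ℝ) + d.re, by linarith, ?_⟩
  have hdd : ((d.re : ℂ)) = d := Complex.ext rfl (by simp [hdim])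
  rw [hEq]
  push_cast
  rw [hdd]
  ring




/-- Lemma 3 (Lemma 1.2): If `f ∈ A_n` and
`|z f''(z) - β (f'(z) - f(z)/z)| < ρ n |n+1-β|` on `U` for some real `ρ > 0` and
complex `β` with `Re β < n+1`, then `|f(z)/z - 1| < ρ` on `U`. -/
theorem stmt_1 (n : ℕ) (hn : 1 ≤ n) (f : ℂ → ℂ)
    (hf : AnalyticOn ℂ f (Metric.ball 0 1))
    (hf0 : f 0 = 0) (hf1 : deriv f 0 = 1)
    (hcoef : ∀ k : ℕ, 2 ≤ k → k ≤ n → iteratedDeriv k f 0 = 0)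
    (ρ : ℝ) (hρ : 0 < ρ) (β : ℂ) (hβ : β.re < n + 1)
    (h : ∀ z ∈ Metric.ball (0 : ℂ) 1, z ≠ 0 →
      ‖z * deriv (deriv f) z - β * (deriv f z - f z / z)‖ <
        ρ * n * ‖(n : ℂ) + 1 - β‖) :
    ∀ z ∈ Metric.ball (0 : ℂ) 1, z ≠ 0 →
      ‖f z / z - 1‖ < ρ := by
  have hfO : AnalyticOnNhd ℂ f (ball 0 1) :=
    (isOpen_ball.analyticOn_iff_analyticOnNhd).mp hf
  set s : ℂ → ℂ := dslope f 0 with hs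
  have hsA : AnalyticOnNhd ℂ s (ball 0 1) := analyticOnNhd_dslope0 hfO
  have hdfA : AnalyticOnNhd ℂ (deriv f) (ball 0 1) := hfO.deriv
  set g : ℂ → ℂ := fun z => deriv f z - s z with hg
  have hgA : AnalyticOnNhd ℂ g (ball 0 1) := hdfA.sub hsA
  set w : ℂ → ℂ := fun z => s z - 1 with hw
  have hwA : AnalyticOnNhd ℂ w (ball 0 1) := hsA.sub analyticOnNhd_const
  have hs_eq : ∀ z : ℂ, z ≠ 0 → s z = f z / z := by
    intro z hz
    rw [hs, dslope_of_ne _ hz, slope_def_field, hf0, sub_zero, sub_zero]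
  have hs0 : s 0 = 1 := by rw [hs, dslope_same, hf1]
  -- power series of f at 0
  obtain ⟨p, hp⟩ := hfO 0 (by simp)
  have hps : HasFPowerSeriesAt s p.fslope 0 := by
    rw [hs]; exact hp.has_fpower_series_dslope_fslope
  have hpcoef : ∀ j : ℕ, 2 ≤ j → j ≤ n → p.coeff j = 0 := by
    intro j h2 hjn
    have h1 := hcoef j h2 hjn
    rw [iteratedDeriv_eq_coeff hp] at h1
    rcases mul_eq_zero.mp h1 with h3 | h3
    · exact absurd h3 (by exact_mod_cast Nat.factorial_ne_zero j)
    · exact h3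
  -- vanishing of derivatives of s at 0 (orders 1..n-1)
  have hsvan : ∀ j : ℕ, 1 ≤ j → j < n → iteratedDeriv j s 0 = 0 := by
    intro j h1 h2
    rw [iteratedDeriv_eq_coeff hps, FormalMultilinearSeries.coeff_fslope]
    rw [hpcoef (j+1) (by omega) (by omega)]
    simp
  -- vanishing of derivatives of w at 0
  have hwvan : ∀ j, j < n → iteratedDeriv j w 0 = 0 := by
    intro j hj
    rcases Nat.eq_zero_or_pos j with rfl | hj1
    · simp [hw, hs0]
    · obtain ⟨m, rfl⟩ : ∃ m, j = m + 1 := ⟨j - 1, by omega⟩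
      have hder : deriv w = deriv s := by
        funext z
        rw [hw]
        exact deriv_sub_const 1
      rw [iteratedDeriv_succ', hder, ← iteratedDeriv_succ']
      exact hsvan (m+1) (by omega) hj
  -- vanishing of derivatives of g at 0
  have hgvan : ∀ j, j < n → iteratedDeriv j g 0 = 0 := by
    intro j hj
    have h0m : (0:ℂ) ∈ ball (0:ℂ) 1 := by simp
    rw [hg, iteratedDeriv_sub_at (hdfA 0 h0m) (hsA 0 h0m)]
    rcases Nat.eq_zero_or_pos j with rfl | hj1
    · simp [hs0, hf1]
    · rw [← iteratedDeriv_succ', hsvan j hj1 hj, sub_zero]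
      exact hcoef (j+1) (by omega) (by omega)
  -- derivative of s away from 0
  have hderiv_s : ∀ z ∈ ball (0:ℂ) 1, z ≠ 0 → deriv s z = g z / z := by
    intro z hz hz0
    have hfd : HasDerivAt f (deriv f z) z := ((hfO z hz).differentiableAt).hasDerivAt
    have h1 : HasDerivAt (fun y : ℂ => f y / y) ((deriv f z * z - f z * 1) / z ^ 2) z :=
      hfd.div (hasDerivAt_id z) hz0
    have hev : s =ᶠ[𝓝 z] fun y => f y / y := by
      filter_upwards [isOpen_ne.mem_nhds hz0] with y hy using hs_eq y hy
    rw [hev.deriv_eq, h1.deriv]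
    rw [hg]
    simp only
    rw [hs_eq z hz0]
    field_simp
  -- the key differential relation for g
  have hderiv_g : ∀ z ∈ ball (0:ℂ) 1, z ≠ 0 →
      z * deriv g z = z * deriv (deriv f) z - g z := by
    intro z hz hz0
    have h1 : deriv g z = deriv (deriv f) z - deriv s z := by
      rw [hg]
      exact deriv_sub ((hdfA z hz).differentiableAt) ((hsA z hz).differentiableAt)
    rw [h1, hderiv_s z hz hz0]
    field_simp
  have hρn : (0:ℝ) < ρ * n := by
    have : (1:ℝ) ≤ n := by exact_mod_cast hn
    nlinarith
  -- STEP 1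
  have step1 : ∀ z ∈ ball (0:ℂ) 1, ‖g z‖ < ρ * n := by
    by_contra hcon
    push_neg at hcon
    obtain ⟨z₁, hz₁, hz₁ge⟩ := hcon
    obtain ⟨z₀, hz₀, hge, hmax⟩ := exists_max_point hgA hz₁
    have hge' : ρ * n ≤ ‖g z₀‖ := le_trans hz₁ge hge
    have hg0 : g z₀ ≠ 0 := by
      intro hzero
      rw [hzero] at hge'
      simp at hge'
      linarith
    have hz₀0 : z₀ ≠ 0 := by
      rintro rfl
      exact hg0 (hgvan 0 (by omega))
    obtain ⟨ψ, hψ, hfacg⟩ := factor_pow hgA hgvan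
    obtain ⟨k, hk, hkey⟩ := jack_lemma hgA hψ hfacg hz₀ hz₀0 hg0 hmax
    have hE := h z₀ hz₀ hz₀0
    have h2 : deriv f z₀ - f z₀ / z₀ = g z₀ := by
      rw [hg]
      simp only
      rw [hs_eq z₀ hz₀0]
    have h3 : z₀ * deriv (deriv f) z₀ = ((k:ℂ) + 1) * g z₀ := by
      have h4 := hderiv_g z₀ hz₀ hz₀0
      rw [hkey] at h4
      linear_combination -h4
    rw [h2, h3] at hE
    have h5 : ((k:ℂ) + 1) * g z₀ - β * g z₀ = (((k:ℂ) + 1 - β)) * g z₀ := by ring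
    rw [h5] at hE
    rw [norm_mul] at hE
    have h6 : ρ * n * ‖(n:ℂ) + 1 - β‖ ≤
        ‖(k:ℂ) + 1 - β‖ * ‖g z₀‖ := by
      have h7 : ‖(n:ℂ) + 1 - β‖ ≤ ‖(k:ℂ) + 1 - β‖ := by
        have := abs_plus_ge hβ hk
        simpa using this
      have h8 : ρ * n ≤ ‖g z₀‖ := by
        simpa using hge'
      have h9 : (0:ℝ) ≤ ‖(n:ℂ) + 1 - β‖ := norm_nonneg _
      calc ρ * n * ‖(n:ℂ) + 1 - β‖
          = ‖(n:ℂ) + 1 - β‖ * (ρ * n) := by ring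
        _ ≤ ‖(k:ℂ) + 1 - β‖ * ‖g z₀‖ :=
            mul_le_mul h7 h8 (by linarith) (norm_nonneg _)
    linarith
  -- STEP 2
  have step2 : ∀ z ∈ ball (0:ℂ) 1, ‖w z‖ < ρ := by
    by_contra hcon
    push_neg at hcon
    obtain ⟨z₁, hz₁, hz₁ge⟩ := hcon
    obtain ⟨z₀, hz₀, hge, hmax⟩ := exists_max_point hwA hz₁
    have hge' : ρ ≤ ‖w z₀‖ := le_trans hz₁ge hge
    have hw0 : w z₀ ≠ 0 := by
      intro hzero
      rw [hzero] at hge'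
      simp at hge'
      linarith
    have hz₀0 : z₀ ≠ 0 := by
      rintro rfl
      exact hw0 (hwvan 0 (by omega))
    obtain ⟨ψ, hψ, hfacw⟩ := factor_pow hwA hwvan
    obtain ⟨k, hk, hkey⟩ := jack_lemma hwA hψ hfacw hz₀ hz₀0 hw0 hmax
    -- z₀ * deriv w z₀ = g z₀
    have h1 : deriv w z₀ = deriv s z₀ := by
      rw [hw]
      exact deriv_sub_const 1
    have h2 : z₀ * deriv w z₀ = g z₀ := by
      rw [h1, hderiv_s z₀ hz₀ hz₀0]
      field_simp
    have h3 : g z₀ = (k:ℂ) * w z₀ := by rw [← h2, hkey]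
    have h4 : ‖g z₀‖ = k * ‖w z₀‖ := by
      rw [h3, norm_mul]
      congr 1
      rw [Complex.norm_real, Real.norm_eq_abs, abs_of_nonneg]
      have : (1:ℝ) ≤ n := by exact_mod_cast hn
      linarith
    have h5 := step1 z₀ hz₀
    have hn1 : (1:ℝ) ≤ (n:ℝ) := by exact_mod_cast hn
    have h6 : ρ * n ≤ k * ‖w z₀‖ := by
      calc ρ * n = n * ρ := by ring
        _ ≤ k * ‖w z₀‖ := mul_le_mul hk hge' (le_of_lt hρ) (by linarith)
    rw [h4] at h5
    linarith
  -- conclusion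
  intro z hz hz0
  have h1 := step2 z hz
  rw [hw] at h1
  simp only at h1
  rw [hs_eq z hz0] at h1
  simpa using h1
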